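/- For every b > 0, the function ψ_b is differentiable at every real τ with sin(bτ/2) ≠ 0, with derivative ψ_b'(τ) = 3 − cos(bτ) − 2bτ·cos(bτ/2)/sin(bτ/2) + (b²τ²/2)/sin²(bτ/2), and this derivative is strictly positive at every such τ. Consequently ψ_b is strictly increasing on each connected component of ℝ \ {2kπ/b : k ∈ ℤ}. -/

import Mathlib

/-!
With `x = bτ/2`, `s = sin x`, `c = cos x`, the derivative is `ψ_b' = (2(x − s c)² + 4 s⁴) / s²`,
which is positive wherever `s ≠ 0`. On `(2kπ/b, 2(k+1)π/b)` the argument `x` stays in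
`(kπ, (k+1)π)`, where `sin` does not vanish, so `ψ_b` is strictly increasing there.
-/

open Real Set

/-- The function `ψ_b(τ) = 3τ − b·τ²·cos(bτ/2)/sin(bτ/2) − sin(bτ)/b`. -/
noncomputable def psi (b τ : ℝ) : ℝ :=
  3 * τ - b * τ ^ 2 * Real.cos (b * τ / 2) / Real.sin (b * τ / 2) - Real.sin (b * τ) / b

noncomputable def psiDeriv (b τ : ℝ) : ℝ :=
  3 - cos (b * τ) - 2 * b * τ * cos (b * τ / 2) / sin (b * τ / 2) +
    (b ^ 2 * τ ^ 2 / 2) / sin (b * τ / 2) ^ 2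

theorem hasDerivAt_psi {b τ : ℝ} (hs : sin (b * τ / 2) ≠ 0) :
    HasDerivAt (psi b) (psiDeriv b τ) τ := by
  have hb : b ≠ 0 := by
    rintro rfl
    simp at hs
  have hhalf : HasDerivAt (fun τ : ℝ => b * τ / 2) (b / 2) τ := by
    simpa using ((hasDerivAt_id τ).const_mul b).div_const 2
  have hlin : HasDerivAt (fun τ : ℝ => b * τ) b τ := by
    simpa using (hasDerivAt_id τ).const_mul b
  have hnum : HasDerivAt (fun τ : ℝ => b * τ ^ 2 * cos (b * τ / 2))
      (b * (2 * τ) * cos (b * τ / 2) + b * τ ^ 2 * (-sin (b * τ / 2) * (b / 2))) τ := by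
    have hsq : HasDerivAt (fun τ : ℝ => b * τ ^ 2) (b * (2 * τ)) τ := by
      simpa using (hasDerivAt_pow 2 τ).const_mul b
    exact hsq.mul ((hasDerivAt_cos _).comp τ hhalf)
  have hquot := hnum.div ((hasDerivAt_sin _).comp τ hhalf) hs
  have hsin := ((hasDerivAt_sin _).comp τ hlin).div_const b
  refine (((hasDerivAt_id τ).const_mul 3).sub hquot |>.sub hsin).congr_deriv ?_
  simp only [psiDeriv, Function.comp_apply]
  field_simp
  linear_combination b ^ 2 * τ ^ 2 * sin_sq_add_cos_sq (b * τ / 2)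

theorem psiDeriv_mul_sin_sq (b τ : ℝ) (hs : sin (b * τ / 2) ≠ 0) :
    psiDeriv b τ * sin (b * τ / 2) ^ 2 =
      2 * (b * τ / 2 - sin (b * τ / 2) * cos (b * τ / 2)) ^ 2 + 4 * sin (b * τ / 2) ^ 4 := by
  have hcos : cos (b * τ) = 1 - 2 * sin (b * τ / 2) ^ 2 := by
    rw [← cos_two_mul_eq_one_sub, mul_div_cancel₀ _ two_ne_zero]
  unfold psiDeriv
  rw [hcos]
  field_simp
  linear_combination (-4 * sin (b * τ / 2) ^ 2) * sin_sq_add_cos_sq (b * τ / 2)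

theorem psiDeriv_pos {b τ : ℝ} (hs : sin (b * τ / 2) ≠ 0) : 0 < psiDeriv b τ := by
  have hprod : 0 < psiDeriv b τ * sin (b * τ / 2) ^ 2 := by
    rw [psiDeriv_mul_sin_sq b τ hs]
    positivity
  exact pos_of_mul_pos_left hprod (by positivity)

theorem sin_ne_zero_of_mem_Ioo {x : ℝ} {k : ℤ} (hx : x ∈ Ioo (k * π) ((k + 1) * π)) :
    sin x ≠ 0 := by
  have hpos := sin_pos_of_pos_of_lt_pi (sub_pos.2 hx.1) (by linarith [hx.2])
  rw [sin_sub_int_mul_pi] at hpos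
  exact right_ne_zero_of_mul hpos.ne'

theorem mul_div_two_mem_Ioo {b τ : ℝ} {k : ℤ}
    (hτ : τ ∈ Ioo (2 * k * π / b) (2 * (k + 1) * π / b)) :
    b * τ / 2 ∈ Ioo (k * π) ((k + 1) * π) := by
  obtain ⟨hlo, hhi⟩ := hτ
  have hb : 0 < b := by
    -- for `b ≤ 0` the interval is empty
    by_contra! hb
    have := div_le_div_of_nonpos_of_le hb (by nlinarith [pi_pos] : 2 * k * π ≤ 2 * (k + 1) * π)
    linarith
  rw [div_lt_iff₀ hb] at hlo
  rw [lt_div_iff₀ hb] at hhi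
  constructor <;> linarith

theorem strictMonoOn_psi (b : ℝ) (k : ℤ) :
    StrictMonoOn (psi b) (Ioo (2 * k * π / b) (2 * (k + 1) * π / b)) := by
  have hs : ∀ τ ∈ Ioo (2 * k * π / b) (2 * (k + 1) * π / b), sin (b * τ / 2) ≠ 0 :=
    fun τ hτ => sin_ne_zero_of_mem_Ioo (mul_div_two_mem_Ioo hτ)
  exact strictMonoOn_of_hasDerivWithinAt_pos (convex_Ioo _ _)
    (fun τ hτ => (hasDerivAt_psi (hs τ hτ)).continuousAt.continuousWithinAt)
    (fun τ hτ => (hasDerivAt_psi (hs τ (interior_subset hτ))).hasDerivWithinAt)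
    (fun τ hτ => psiDeriv_pos (hs τ (interior_subset hτ)))

theorem statement5_general (b : ℝ) :
    (∀ τ : ℝ, Real.sin (b * τ / 2) ≠ 0 →
      HasDerivAt (psi b)
        (3 - Real.cos (b * τ) - 2 * b * τ * Real.cos (b * τ / 2) / Real.sin (b * τ / 2) +
          (b ^ 2 * τ ^ 2 / 2) / Real.sin (b * τ / 2) ^ 2) τ) ∧
    (∀ τ : ℝ, Real.sin (b * τ / 2) ≠ 0 →
      0 < 3 - Real.cos (b * τ) - 2 * b * τ * Real.cos (b * τ / 2) / Real.sin (b * τ / 2) +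
          (b ^ 2 * τ ^ 2 / 2) / Real.sin (b * τ / 2) ^ 2) ∧
    (∀ k : ℤ, StrictMonoOn (psi b)
      (Set.Ioo (2 * k * Real.pi / b) (2 * (k + 1) * Real.pi / b))) :=
  ⟨fun _ hs => hasDerivAt_psi hs, fun _ hs => psiDeriv_pos hs, strictMonoOn_psi b⟩

/-- For every `b > 0`, the function `ψ_b` is differentiable at every
`τ` with `sin(bτ/2) ≠ 0`, with derivative
`ψ_b'(τ) = 3 − cos(bτ) − 2bτ·cos(bτ/2)/sin(bτ/2) + (b²τ²/2)/sin²(bτ/2)`,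
this derivative is strictly positive at every such `τ`, and consequently `ψ_b` is
strictly increasing on each connected component of `ℝ \ {2kπ/b : k ∈ ℤ}`, namely
on each interval `(2kπ/b, 2(k+1)π/b)`, `k ∈ ℤ`. -/
theorem statement5 (b : ℝ) (hb : 0 < b) :
    (∀ τ : ℝ, Real.sin (b * τ / 2) ≠ 0 →
      HasDerivAt (psi b)
        (3 - Real.cos (b * τ) - 2 * b * τ * Real.cos (b * τ / 2) / Real.sin (b * τ / 2) +
          (b ^ 2 * τ ^ 2 / 2) / Real.sin (b * τ / 2) ^ 2) τ) ∧
    (∀ τ : ℝ, Real.sin (b * τ / 2) ≠ 0 →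
      0 < 3 - Real.cos (b * τ) - 2 * b * τ * Real.cos (b * τ / 2) / Real.sin (b * τ / 2) +
          (b ^ 2 * τ ^ 2 / 2) / Real.sin (b * τ / 2) ^ 2) ∧
    (∀ k : ℤ, StrictMonoOn (psi b)
      (Set.Ioo (2 * k * Real.pi / b) (2 * (k + 1) * Real.pi / b))) :=
  statement5_general b
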